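/- Let α₁,α₂,α₃,β₁,ε ∈ ℝ and let (x₁,x₂,x₃,x̃₁,x̃₂,x̃₃) ∈ ℝ⁶ satisfy the dZV equations with β₂ = β₃ = 0: x̃₁ − x₁ = εα₁(x̃₂x₃ + x₂x̃₃), x̃₂ − x₂ = εα₂(x̃₃x₁ + x₃x̃₁) + εβ₁(x̃₃ + x₃), x̃₃ − x₃ = εα₃(x̃₁x₂ + x₁x̃₂) − εβ₁(x̃₂ + x₂). Assume 1 − ε²α₃α₁x₂² ≠ 0, 1 − ε²α₁α₂x₃² ≠ 0 and the same for tilded variables. Then H₂(ε) = (α₃x₁² − α₁x₃² − 2β₁x₁ + ε²β₁²α₁x₂²)/(1 − ε²α₃α₁x₂²) and H₃(ε) = (α₁x₂² − α₂x₁² − 2β₁x₁ − ε²β₁²α₁x₃²)/(1 − ε²α₁α₂x₃²) are conserved quantities: H₂(ε) and H₃(ε) take the same values at (x̃₁,x̃₂,x̃₃) as at (x₁,x₂,x₃). -/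
import Mathlib


/-- Conserved quantities `H₂(ε)`, `H₃(ε)` of the Hirota–Kimura discretization
of the Zhukovski–Volterra gyrostat with `β₂ = β₃ = 0`. -/
theorem dZV_two_vanishing_beta_integrals (a1 a2 a3 b1 ε x1 x2 x3 xt1 xt2 xt3 : ℝ)
    (h1 : xt1 - x1 = ε * a1 * (xt2 * x3 + x2 * xt3))
    (h2 : xt2 - x2 = ε * a2 * (xt3 * x1 + x3 * xt1) + ε * b1 * (xt3 + x3))
    (h3 : xt3 - x3 = ε * a3 * (xt1 * x2 + x1 * xt2) - ε * b1 * (xt2 + x2))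
    (hd2 : 1 - ε ^ 2 * a3 * a1 * x2 ^ 2 ≠ 0)
    (hd3 : 1 - ε ^ 2 * a1 * a2 * x3 ^ 2 ≠ 0)
    (hdt2 : 1 - ε ^ 2 * a3 * a1 * xt2 ^ 2 ≠ 0)
    (hdt3 : 1 - ε ^ 2 * a1 * a2 * xt3 ^ 2 ≠ 0) :
    (a3 * xt1 ^ 2 - a1 * xt3 ^ 2 - 2 * b1 * xt1 + ε ^ 2 * b1 ^ 2 * a1 * xt2 ^ 2)
        / (1 - ε ^ 2 * a3 * a1 * xt2 ^ 2)
      = (a3 * x1 ^ 2 - a1 * x3 ^ 2 - 2 * b1 * x1 + ε ^ 2 * b1 ^ 2 * a1 * x2 ^ 2)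
        / (1 - ε ^ 2 * a3 * a1 * x2 ^ 2) ∧
    (a1 * xt2 ^ 2 - a2 * xt1 ^ 2 - 2 * b1 * xt1 - ε ^ 2 * b1 ^ 2 * a1 * xt3 ^ 2)
        / (1 - ε ^ 2 * a1 * a2 * xt3 ^ 2)
      = (a1 * x2 ^ 2 - a2 * x1 ^ 2 - 2 * b1 * x1 - ε ^ 2 * b1 ^ 2 * a1 * x3 ^ 2)
        / (1 - ε ^ 2 * a1 * a2 * x3 ^ 2) := by
  constructor
  · rw [div_eq_div_iff hdt2 hd2]
    linear_combination
      (-2 * b1 + a3 * xt1 + a3 * x1 + a1 * a3 * ε * x3 * xt2 - a1 * a3 * ε * x2 * xt3) * h1 +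
      (-(a1 * xt3) - a1 * x3 + a1 * b1 * ε * xt2 - a1 * b1 * ε * x2 + a1 * a3 * ε * x2 * xt1
        - a1 * a3 * ε * x1 * xt2) * h3
  · rw [div_eq_div_iff hdt3 hd3]
    linear_combination
      (-2 * b1 - a2 * xt1 - a2 * x1 + a1 * a2 * ε * x3 * xt2 - a1 * a2 * ε * x2 * xt3) * h1 +
      (a1 * xt2 + a1 * x2 + a1 * b1 * ε * xt3 - a1 * b1 * ε * x3 - a1 * a2 * ε * x3 * xt1
        + a1 * a2 * ε * x1 * xt3) * h2
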